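/- arXiv:1911.01795 — 2 statements merged into one kernel-verified Lean document; each statement's English description precedes it below -/
import Mathlib

section
/- Let ω ∈ L¹ ∩ L²(ℝ²₊) be nonnegative with x₂ω ∈ L¹(ℝ²₊). Then for every x ∈ ℝ²₊, the stream function ψ(x) = ∫ G(x,y) ω(y) dy satisfies ψ(x) ≤ C x₂^{1/2} ‖ω‖₁^{1/2} ‖ω‖₂^{1/2} for an absolute constant C independent of ω and x. -/
/-!
By Hölder with exponents `(4, 4/3)` and the interpolation `‖ω‖_{4/3} ≤ ‖ω‖₁^{1/2} ‖ω‖₂^{1/2}`,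
it suffices to show `‖G(x, ·)‖_{L⁴(ℝ²₊)}⁴ ≤ 4 x₂² / π⁴`. By the layer-cake formula this follows
from a bound on the superlevel sets: `G(x, y) > σ` says `c |x - y|² < 4 x₂ y₂` with
`c = e^{4πσ} - 1`, an open disc of area `O(x₂² e^{4πσ} / c²) = O(x₂² e^{-2πσ} / σ²)`.
-/

open Real MeasureTheory

def upperHalf : Set (ℝ × ℝ) := {p | 0 < p.2}

noncomputable def sqdist (x y : ℝ × ℝ) : ℝ := (x.1 - y.1) ^ 2 + (x.2 - y.2) ^ 2

noncomputable def halfPlaneGreen (x y : ℝ × ℝ) : ℝ :=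
  (1 / (4 * π)) * Real.log (1 + 4 * x.2 * y.2 / sqdist x y)

open scoped ENNReal

lemma mul_exp_half_le_two_mul_sinh {u : ℝ} (hu : 0 ≤ u) : u * exp (u / 2) ≤ 2 * sinh u := by
  have hsinh : u / 2 ≤ sinh (u / 2) := self_le_sinh_iff.2 (by positivity)
  have hcosh : exp (u / 2) / 2 ≤ cosh (u / 2) := by
    rw [cosh_eq]; linarith [exp_pos (-(u / 2))]
  calc u * exp (u / 2) = 4 * ((u / 2) * (exp (u / 2) / 2)) := by ring
    _ ≤ 4 * (sinh (u / 2) * cosh (u / 2)) := by gcongr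
    _ = 2 * sinh u := by rw [← mul_div_cancel₀ u (two_ne_zero' ℝ), sinh_two_mul]; ring_nf

lemma exp_div_sq_exp_sub_one_le {v : ℝ} (hv : 0 < v) :
    exp v / (exp v - 1) ^ 2 ≤ 4 * exp (-(v / 2)) / v ^ 2 := by
  set E := exp (v / 4)
  have hE0 : 0 < E := exp_pos _
  have hpow : ∀ n : ℕ, exp (n * (v / 4)) = E ^ n := fun n => by rw [exp_nat_mul]
  have h4 : exp v = E ^ 4 := by rw [← hpow]; push_cast; ring_nf
  have h2 : exp (-(v / 2)) = 1 / E ^ 2 := by rw [exp_neg, ← hpow]; push_cast; ring_nf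
  have hsinh : 2 * sinh (v / 2) = E ^ 2 - 1 / E ^ 2 := by
    rw [sinh_eq, ← h2, ← hpow]; push_cast; ring_nf
  have hkey : v / 2 * E ^ 3 ≤ E ^ 4 - 1 := by
    have := mul_exp_half_le_two_mul_sinh (u := v / 2) (by positivity)
    rw [hsinh, show v / 2 / 2 = v / 4 by ring] at this
    have := mul_le_mul_of_nonneg_right this (sq_nonneg E)
    field_simp at this ⊢
    nlinarith
  have hpos : 0 < E ^ 4 - 1 := lt_of_lt_of_le (by positivity) hkey
  rw [h4, h2, div_le_div_iff₀ (by positivity) (by positivity)]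
  field_simp
  nlinarith [mul_le_mul hkey hkey (by positivity) hpos.le]

lemma lintegral_mul_le_L4_mul_L1_L2 {α : Type*} [MeasurableSpace α] {μ : Measure α}
    {f u : α → ℝ≥0∞} (hf : AEMeasurable f μ) (hu : AEMeasurable u μ) :
    ∫⁻ a, f a * u a ∂μ ≤
      (∫⁻ a, f a ^ (4 : ℝ) ∂μ) ^ (1 / 4 : ℝ) * (∫⁻ a, u a ∂μ) ^ (1 / 2 : ℝ) *
        (∫⁻ a, u a ^ (2 : ℝ) ∂μ) ^ (1 / 4 : ℝ) := by
  -- Hölder with exponents `(4, 4/3)`, then `‖u‖_{4/3} ≤ ‖u‖₁^{1/2} ‖u‖₂^{1/2}` by Hölder again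
  have hsplit : ∀ a, f a * u a = (f a ^ (4 : ℝ)) ^ (1 / 4 : ℝ) *
      (u a ^ (2 / 3 : ℝ) * (u a ^ (2 : ℝ)) ^ (1 / 3 : ℝ)) ^ (3 / 4 : ℝ) := by
    intro a
    rw [← ENNReal.rpow_mul, ← ENNReal.rpow_mul,
      ← ENNReal.rpow_add_of_nonneg _ _ (by norm_num) (by norm_num), ← ENNReal.rpow_mul]
    norm_num
  calc ∫⁻ a, f a * u a ∂μ
      = ∫⁻ a, (f a ^ (4 : ℝ)) ^ (1 / 4 : ℝ) *
          (u a ^ (2 / 3 : ℝ) * (u a ^ (2 : ℝ)) ^ (1 / 3 : ℝ)) ^ (3 / 4 : ℝ) ∂μ := by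
        simp_rw [hsplit]
    _ ≤ (∫⁻ a, f a ^ (4 : ℝ) ∂μ) ^ (1 / 4 : ℝ) *
          (∫⁻ a, u a ^ (2 / 3 : ℝ) * (u a ^ (2 : ℝ)) ^ (1 / 3 : ℝ) ∂μ) ^ (3 / 4 : ℝ) :=
        ENNReal.lintegral_mul_norm_pow_le (hf.pow_const _)
          ((hu.pow_const _).mul ((hu.pow_const _).pow_const _)) (by norm_num) (by norm_num)
          (by norm_num)
    _ ≤ (∫⁻ a, f a ^ (4 : ℝ) ∂μ) ^ (1 / 4 : ℝ) *
          ((∫⁻ a, u a ∂μ) ^ (2 / 3 : ℝ) * (∫⁻ a, u a ^ (2 : ℝ) ∂μ) ^ (1 / 3 : ℝ)) ^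
            (3 / 4 : ℝ) := by
        gcongr
        exact ENNReal.lintegral_mul_norm_pow_le hu (hu.pow_const _) (by norm_num) (by norm_num)
          (by norm_num)
    _ = _ := by
        rw [ENNReal.mul_rpow_of_nonneg _ _ (by norm_num), ← ENNReal.rpow_mul, ← ENNReal.rpow_mul,
          mul_assoc]
        norm_num

lemma integral_mul_le_of_lintegral_rpow_four_le {α : Type*} [MeasurableSpace α] {μ : Measure α}
    {f u : α → ℝ} (hf : 0 ≤ᵐ[μ] f) (hfm : AEMeasurable f μ) (hu : 0 ≤ᵐ[μ] u)
    (hu₁ : Integrable u μ) (hu₂ : MemLp u 2 μ) {K : ℝ} (hK : 0 ≤ K)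
    (hfK : ∫⁻ a, ENNReal.ofReal (f a ^ (4 : ℝ)) ∂μ ≤ ENNReal.ofReal K) :
    ∫ a, f a * u a ∂μ ≤
      K ^ (1 / 4 : ℝ) * (∫ a, u a ∂μ) ^ (1 / 2 : ℝ) * (∫ a, u a ^ 2 ∂μ) ^ (1 / 4 : ℝ) := by
  have hA : 0 ≤ ∫ a, u a ∂μ := integral_nonneg_of_ae hu
  have hQ : 0 ≤ ∫ a, u a ^ 2 ∂μ := integral_nonneg_of_ae (ae_of_all _ fun a => sq_nonneg (u a))
  have hL1 : ∫⁻ a, ENNReal.ofReal (u a) ∂μ = ENNReal.ofReal (∫ a, u a ∂μ) :=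
    (ofReal_integral_eq_lintegral_ofReal hu₁ hu).symm
  have hL2 : ∫⁻ a, ENNReal.ofReal (u a) ^ (2 : ℝ) ∂μ = ENNReal.ofReal (∫ a, u a ^ 2 ∂μ) := by
    rw [ofReal_integral_eq_lintegral_ofReal hu₂.integrable_sq (ae_of_all _ fun a => sq_nonneg _)]
    refine lintegral_congr_ae (hu.mono fun a (ha : 0 ≤ u a) => ?_)
    dsimp only
    rw [ENNReal.ofReal_rpow_of_nonneg ha two_pos.le, rpow_two]
  have hL4 : ∫⁻ a, ENNReal.ofReal (f a) ^ (4 : ℝ) ∂μ ≤ ENNReal.ofReal K := by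
    refine le_of_eq_of_le (lintegral_congr_ae (hf.mono fun a (ha : 0 ≤ f a) => ?_)) hfK
    exact ENNReal.ofReal_rpow_of_nonneg ha (by norm_num)
  rw [integral_eq_lintegral_of_nonneg_ae (hf.mp (hu.mono fun a hua hfa => mul_nonneg hfa hua))
    (hfm.aestronglyMeasurable.mul hu₁.aestronglyMeasurable)]
  refine ENNReal.toReal_le_of_le_ofReal (by positivity) ?_
  calc ∫⁻ a, ENNReal.ofReal (f a * u a) ∂μ
      = ∫⁻ a, ENNReal.ofReal (f a) * ENNReal.ofReal (u a) ∂μ :=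
        lintegral_congr_ae (hf.mono fun a ha => ENNReal.ofReal_mul ha)
    _ ≤ (∫⁻ a, ENNReal.ofReal (f a) ^ (4 : ℝ) ∂μ) ^ (1 / 4 : ℝ) *
          (∫⁻ a, ENNReal.ofReal (u a) ∂μ) ^ (1 / 2 : ℝ) *
          (∫⁻ a, ENNReal.ofReal (u a) ^ (2 : ℝ) ∂μ) ^ (1 / 4 : ℝ) :=
        lintegral_mul_le_L4_mul_L1_L2 hfm.ennreal_ofReal hu₁.aemeasurable.ennreal_ofReal
    _ ≤ ENNReal.ofReal K ^ (1 / 4 : ℝ) * ENNReal.ofReal (∫ a, u a ∂μ) ^ (1 / 2 : ℝ) *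
          ENNReal.ofReal (∫ a, u a ^ 2 ∂μ) ^ (1 / 4 : ℝ) := by
        rw [hL1, hL2]; gcongr
    _ = _ := by
        rw [ENNReal.ofReal_rpow_of_nonneg hK (by norm_num),
          ENNReal.ofReal_rpow_of_nonneg hA (by norm_num),
          ENNReal.ofReal_rpow_of_nonneg hQ (by norm_num),
          ← ENNReal.ofReal_mul (by positivity), ← ENNReal.ofReal_mul (by positivity)]

lemma lintegral_Ioi_mul_exp_neg_mul {r : ℝ} (hr : 0 < r) :
    ∫⁻ t in Set.Ioi 0, ENNReal.ofReal (t * exp (-(r * t))) = ENNReal.ofReal (r ^ 2)⁻¹ := by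
  have hint : IntegrableOn (fun t : ℝ => t * exp (-(r * t))) (Set.Ioi 0) := by
    simpa [rpow_one, neg_mul] using
      integrableOn_rpow_mul_exp_neg_mul_rpow (s := 1) (p := 1) (by norm_num) one_pos hr
  rw [← ofReal_integral_eq_lintegral_ofReal hint
    ((ae_restrict_iff' measurableSet_Ioi).2 (ae_of_all _ fun t (ht : 0 < t) => by positivity))]
  have := integral_rpow_mul_exp_neg_mul_Ioi two_pos hr
  norm_num [Gamma_two] at this
  rw [this]

lemma measurableSet_upperHalf : MeasurableSet upperHalf :=
  measurableSet_lt measurable_const measurable_snd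

lemma measurable_halfPlaneGreen (x : ℝ × ℝ) : Measurable (halfPlaneGreen x) := by
  unfold halfPlaneGreen sqdist
  fun_prop

lemma halfPlaneGreen_nonneg {x y : ℝ × ℝ} (hx : 0 ≤ x.2) (hy : 0 ≤ y.2) :
    0 ≤ halfPlaneGreen x y := by
  have hd : 0 ≤ sqdist x y := by unfold sqdist; positivity
  exact mul_nonneg (by positivity)
    (log_nonneg (by simp only [le_add_iff_nonneg_right]; positivity))

lemma halfPlaneGreen_nonneg_ae_upperHalf {x : ℝ × ℝ} (hx : 0 ≤ x.2) :
    0 ≤ᵐ[volume.restrict upperHalf] halfPlaneGreen x :=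
  (ae_restrict_iff' measurableSet_upperHalf).2 <|
    ae_of_all _ fun y (hy : 0 < y.2) => halfPlaneGreen_nonneg hx hy.le

lemma volume_setOf_mul_sqdist_lt_le (x : ℝ × ℝ) {c : ℝ} (hc : 0 < c) :
    volume {y : ℝ × ℝ | c * sqdist x y < 4 * x.2 * y.2} ≤
      ENNReal.ofReal (16 * x.2 ^ 2 * (1 + c) / c ^ 2) := by
  -- completing the square: the set is the open disc of centre `(x₁, b)` and radius `R`
  set b := x.2 * (1 + 2 / c)
  set R := 2 * |x.2| * √(1 + c) / c
  have hR : R ^ 2 = 4 * x.2 ^ 2 * (1 + c) / c ^ 2 := by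
    simp only [R, div_pow, mul_pow, sq_abs, sq_sqrt (by linarith : 0 ≤ 1 + c)]; ring
  have hR0 : 0 ≤ R := by positivity
  have hdisc : {y : ℝ × ℝ | c * sqdist x y < 4 * x.2 * y.2} ⊆
      Set.Ioo (x.1 - R) (x.1 + R) ×ˢ Set.Ioo (b - R) (b + R) := by
    rintro ⟨y₁, y₂⟩ hy
    have hlt : (y₁ - x.1) ^ 2 + (y₂ - b) ^ 2 < R ^ 2 := by
      simp only [Set.mem_ofPred_eq, sqdist] at hy
      rw [hR, lt_div_iff₀ (by positivity)]
      simp only [b]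
      field_simp
      nlinarith
    obtain ⟨h₁, h₁'⟩ := abs_lt.mp (abs_lt_of_sq_lt_sq (by nlinarith [sq_nonneg (y₂ - b)]) hR0)
    obtain ⟨h₂, h₂'⟩ := abs_lt.mp (abs_lt_of_sq_lt_sq (by nlinarith [sq_nonneg (y₁ - x.1)]) hR0)
    exact ⟨⟨by linarith, by linarith⟩, ⟨by linarith, by linarith⟩⟩
  calc volume {y : ℝ × ℝ | c * sqdist x y < 4 * x.2 * y.2}
      ≤ volume (Set.Ioo (x.1 - R) (x.1 + R) ×ˢ Set.Ioo (b - R) (b + R)) := measure_mono hdisc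
    _ = ENNReal.ofReal (4 * R ^ 2) := by
      rw [Measure.volume_eq_prod, Measure.prod_prod, Real.volume_Ioo, Real.volume_Ioo,
        ← ENNReal.ofReal_mul (by linarith)]
      ring_nf
    _ = ENNReal.ofReal (16 * x.2 ^ 2 * (1 + c) / c ^ 2) := by rw [hR]; ring_nf

lemma superlevel_halfPlaneGreen_subset {x : ℝ × ℝ} (hx : 0 < x.2) (σ : ℝ) :
    {y | σ < halfPlaneGreen x y} ∩ upperHalf ⊆
      {y | (exp (4 * π * σ) - 1) * sqdist x y < 4 * x.2 * y.2} := by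
  rintro y ⟨hσ, hy⟩
  have hy : 0 < y.2 := hy
  have hd : 0 ≤ sqdist x y := by unfold sqdist; positivity
  set r := 4 * x.2 * y.2 / sqdist x y
  have hr : 0 ≤ r := by positivity
  have hexp : exp (4 * π * σ) < 1 + r := by
    rw [← lt_log_iff_exp_lt (by linarith)]
    have := mul_lt_mul_of_pos_left hσ (by positivity : (0 : ℝ) < 4 * π)
    rwa [halfPlaneGreen, ← mul_assoc, mul_one_div_cancel (by positivity), one_mul] at this
  show (exp (4 * π * σ) - 1) * sqdist x y < 4 * x.2 * y.2
  rcases hd.eq_or_lt with hd0 | hd0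
  · rw [← hd0]; simp only [mul_zero]; positivity
  · calc (exp (4 * π * σ) - 1) * sqdist x y < r * sqdist x y := by gcongr; linarith
      _ = 4 * x.2 * y.2 := div_mul_cancel₀ _ hd0.ne'

lemma volume_superlevel_halfPlaneGreen_le {x : ℝ × ℝ} (hx : 0 < x.2) {σ : ℝ} (hσ : 0 < σ) :
    volume ({y | σ < halfPlaneGreen x y} ∩ upperHalf) ≤
      ENNReal.ofReal (4 * x.2 ^ 2 * exp (-(2 * π * σ)) / (π ^ 2 * σ ^ 2)) := by
  have hv : 0 < 4 * π * σ := by positivity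
  have hc : 0 < exp (4 * π * σ) - 1 := by linarith [add_one_lt_exp hv.ne']
  refine (measure_mono (superlevel_halfPlaneGreen_subset hx σ)).trans <|
    (volume_setOf_mul_sqdist_lt_le x hc).trans <| ENNReal.ofReal_le_ofReal ?_
  calc 16 * x.2 ^ 2 * (1 + (exp (4 * π * σ) - 1)) / (exp (4 * π * σ) - 1) ^ 2
      = 16 * x.2 ^ 2 * (exp (4 * π * σ) / (exp (4 * π * σ) - 1) ^ 2) := by ring
    _ ≤ 16 * x.2 ^ 2 * (4 * exp (-(4 * π * σ / 2)) / (4 * π * σ) ^ 2) :=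
      mul_le_mul_of_nonneg_left (exp_div_sq_exp_sub_one_le hv) (by positivity)
    _ = 4 * x.2 ^ 2 * exp (-(2 * π * σ)) / (π ^ 2 * σ ^ 2) := by
      field_simp; ring_nf

lemma lintegral_halfPlaneGreen_rpow_four_le {x : ℝ × ℝ} (hx : 0 < x.2) :
    ∫⁻ y in upperHalf, ENNReal.ofReal (halfPlaneGreen x y ^ (4 : ℝ)) ≤
      ENNReal.ofReal (4 * x.2 ^ 2 / π ^ 4) := by
  have hlevel : ∀ t ∈ Set.Ioi (0 : ℝ),
      volume.restrict upperHalf {y | t < halfPlaneGreen x y} * ENNReal.ofReal (t ^ ((4 : ℝ) - 1))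
        ≤ ENNReal.ofReal (4 * x.2 ^ 2 / π ^ 2) * ENNReal.ofReal (t * exp (-(2 * π * t))) := by
    intro t (ht : 0 < t)
    rw [Measure.restrict_apply' measurableSet_upperHalf]
    refine (mul_le_mul_left (volume_superlevel_halfPlaneGreen_le hx ht) _).trans_eq ?_
    rw [← ENNReal.ofReal_mul (by positivity), ← ENNReal.ofReal_mul (by positivity)]
    congr 1
    norm_num
    field_simp
  calc ∫⁻ y in upperHalf, ENNReal.ofReal (halfPlaneGreen x y ^ (4 : ℝ))
      = ENNReal.ofReal 4 * ∫⁻ t in Set.Ioi 0, volume.restrict upperHalf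
          {y | t < halfPlaneGreen x y} * ENNReal.ofReal (t ^ ((4 : ℝ) - 1)) :=
        lintegral_rpow_eq_lintegral_meas_lt_mul _ (halfPlaneGreen_nonneg_ae_upperHalf hx.le)
          (measurable_halfPlaneGreen x).aemeasurable (by norm_num)
    _ ≤ ENNReal.ofReal 4 * ∫⁻ t in Set.Ioi 0,
          ENNReal.ofReal (4 * x.2 ^ 2 / π ^ 2) * ENNReal.ofReal (t * exp (-(2 * π * t))) := by
        gcongr 1
        exact setLIntegral_mono' measurableSet_Ioi hlevel
    _ = ENNReal.ofReal (4 * x.2 ^ 2 / π ^ 4) := by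
        rw [lintegral_const_mul' _ _ ENNReal.ofReal_ne_top,
          lintegral_Ioi_mul_exp_neg_mul (by positivity), ← ENNReal.ofReal_mul (by positivity),
          ← ENNReal.ofReal_mul (by positivity)]
        congr 1
        field_simp
        ring

/-- Pointwise bound on the stream function `ψ(x) = ∫ G(x,y) ω(y) dy`:
`ψ(x) ≤ C x₂^{1/2} ‖ω‖₁^{1/2} ‖ω‖₂^{1/2}` with an absolute constant `C`. -/
theorem stream_function_bound :
    ∃ C > 0, ∀ ω : ℝ × ℝ → ℝ,
      (∀ p, 0 ≤ ω p) →
      Integrable ω (volume.restrict upperHalf) →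
      MemLp ω 2 (volume.restrict upperHalf) →
      Integrable (fun p => p.2 * ω p) (volume.restrict upperHalf) →
      ∀ x ∈ upperHalf,
        (∫ y in upperHalf, halfPlaneGreen x y * ω y) ≤
          C * Real.sqrt x.2 * (∫ p in upperHalf, ω p) ^ ((1 : ℝ) / 2) *
            (∫ p in upperHalf, (ω p) ^ 2) ^ ((1 : ℝ) / 4) := by
  refine ⟨√2 / π, by positivity, fun ω hω hω₁ hω₂ _ x (hx : 0 < x.2) => ?_⟩
  have hroot : (4 * x.2 ^ 2 / π ^ 4) ^ (1 / 4 : ℝ) = √2 / π * √x.2 := by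
    have hpow : (√2 / π * √x.2) ^ 4 = 4 * x.2 ^ 2 / π ^ 4 := by
      calc (√2 / π * √x.2) ^ 4 = (√2 ^ 2) ^ 2 * (√x.2 ^ 2) ^ 2 / π ^ 4 := by ring
        _ = 4 * x.2 ^ 2 / π ^ 4 := by rw [sq_sqrt two_pos.le, sq_sqrt hx.le]; ring
    rw [← hpow]
    convert Real.pow_rpow_inv_natCast (by positivity : 0 ≤ √2 / π * √x.2) four_ne_zero using 2
    norm_num
  calc (∫ y in upperHalf, halfPlaneGreen x y * ω y)
      ≤ (4 * x.2 ^ 2 / π ^ 4) ^ (1 / 4 : ℝ) * (∫ p in upperHalf, ω p) ^ (1 / 2 : ℝ) *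
          (∫ p in upperHalf, ω p ^ 2) ^ (1 / 4 : ℝ) :=
        integral_mul_le_of_lintegral_rpow_four_le (halfPlaneGreen_nonneg_ae_upperHalf hx.le)
          (measurable_halfPlaneGreen x).aemeasurable (ae_of_all _ hω) hω₁ hω₂ (by positivity)
          (lintegral_halfPlaneGreen_rpow_four_le hx)
    _ = √2 / π * √x.2 * (∫ p in upperHalf, ω p) ^ ((1 : ℝ) / 2) *
          (∫ p in upperHalf, (ω p) ^ 2) ^ ((1 : ℝ) / 4) := by rw [hroot]
end

section
/- If ω ∈ S_μ is a minimizer of the penalized energy with associated Lagrange multipliers W, γ ≥ 0 and stream function ψ, satisfying ω = (ψ − Wx₂ − γ)₊ with W > 0, and ψ(x)/x₂ → 0 as |x| → ∞, then the support of ω is compact in the closed half-plane: spt ω ⊂ {x ∈ ℝ²₊ : W x₂ ≤ ψ(x)}, which is bounded. -/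
open Real MeasureTheory

/-- Compact support of minimizers: if `ω = (ψ − Wx₂ − γ)₊` with `W > 0` and
`ψ(x)/x₂ → 0` at infinity, then the support of `ω` lies in the bounded set
`{x ∈ ℝ²₊ : Wx₂ ≤ ψ(x)}`. -/
theorem support_compact (ω ψ : ℝ × ℝ → ℝ) (W γ : ℝ) (hW : 0 < W) (hγ : 0 ≤ γ)
    (hψ : ∀ x ∈ upperHalf, ψ x = ∫ y in upperHalf, halfPlaneGreen x y * ω y)
    (hEL : ∀ x ∈ upperHalf, ω x = max (ψ x - W * x.2 - γ) 0)
    (hdecay : ∀ ε > 0, ∃ R : ℝ, ∀ x ∈ upperHalf, R ≤ ‖x‖ → ψ x / x.2 ≤ ε) :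
    ({x ∈ upperHalf | ω x ≠ 0} ⊆ {x ∈ upperHalf | W * x.2 ≤ ψ x}) ∧
    Bornology.IsBounded {x ∈ upperHalf | W * x.2 ≤ ψ x} := by
  constructor
  · rintro x ⟨hx, hω⟩
    refine ⟨hx, ?_⟩
    rw [hEL x hx] at hω
    have h : 0 < ψ x - W * x.2 - γ := by
      by_contra h
      push_neg at h
      simp [max_eq_right h] at hω
    nlinarith
  · obtain ⟨R, hR⟩ := hdecay (W / 2) (by linarith)
    apply Bornology.IsBounded.subset (Metric.isBounded_closedBall (x := (0:ℝ×ℝ)) (r := |R|))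
    rintro x ⟨hx, hle⟩
    rw [Metric.mem_closedBall, dist_zero_right]
    by_contra hc
    push_neg at hc
    have h2 : ψ x / x.2 ≤ W / 2 := hR x hx (le_of_lt (lt_of_le_of_lt (le_abs_self R) hc))
    have hx2 : 0 < x.2 := hx
    have : W ≤ ψ x / x.2 := (le_div_iff₀ hx2).mpr (by linarith)
    linarith
end
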